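/- Let F_q be a finite field and A, B ⊆ F_q with |A|·|B| > q. If A is symmetric (A = −A) or antisymmetric (A ∩ (−A) = ∅), or if B is symmetric or antisymmetric, then 8·(AB) = F_q. -/

import Mathlib

/-!
Glibichuk's argument. Averaging over `η ∈ F` the number of solutions of `a + ηb = a' + ηb'` in
`(A × B)²` gives an `η` for which it is `< 2 (|A||B|)² / q`. It is also the number of solutions
of `a - ηb = a' - ηb'`, so by Cauchy–Schwarz both `A + ηB` and `A - ηB` have more than `q / 2`
elements, and sums of two elements of either, or differences of two elements of `A + ηB`,
cover `F`.

If `B ∩ -B = ∅`, a representation `0 = (a₀ + ηb₀) + (a₀' + ηb₀')` has `b₀ + b₀' ≠ 0`; writing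
`x / (b₀ + b₀')` as a sum of two elements of `A - ηB` and substituting
`η (b₀ + b₀') = -(a₀ + a₀')` expresses `x` as `∑ aᵢ (bᵢ + bᵢ')` with four terms. If `B = -B`,
pigeonhole on `ηb - a` gives `η (b₀ - b₀') = a₀ - a₀'` with `b₀ ≠ b₀'`, and a difference in
`A + ηB` is used instead; its signs are absorbed by `B = -B`.
-/

open Finset Pointwise

theorem exists_add_eq_of_card_lt_card_add_card {G : Type*} [AddGroup G] [Fintype G]
    [DecidableEq G] {X Y : Finset G} (h : Fintype.card G < #X + #Y) (x : G) :
    ∃ u ∈ X, ∃ v ∈ Y, u + v = x := by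
  obtain ⟨u, hu⟩ := inter_nonempty_of_card_lt_card_add_card (subset_univ X)
    (subset_univ (Y.image (x - ·)))
    (by rwa [card_univ, card_image_of_injective _ sub_right_injective])
  obtain ⟨huX, v, hv, rfl⟩ := mem_inter.1 hu |>.imp_right mem_image.1
  exact ⟨_, huX, v, hv, sub_add_cancel x v⟩

section Collisions

variable {α β : Type*} [DecidableEq β]

def collisions (s : Finset α) (f : α → β) : Finset (α × α) := {p ∈ s ×ˢ s | f p.1 = f p.2}

theorem card_collisions_eq_sum_sq (s : Finset α) (f : α → β) :
    #(collisions s f) = ∑ c ∈ s.image f, #{z ∈ s | f z = c} ^ 2 := by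
  rw [collisions, card_eq_sum_card_fiberwise (f := fun p => f p.1) (t := s.image f)
    fun p hp => mem_image_of_mem f (mem_product.1 (mem_filter.1 hp).1).1]
  refine sum_congr rfl fun c _ => ?_
  rw [sq, ← card_product]
  congr 1
  ext ⟨u, v⟩
  simp only [mem_filter, mem_product]
  constructor
  · rintro ⟨⟨⟨hu, hv⟩, huv⟩, rfl⟩
    exact ⟨⟨hu, rfl⟩, hv, huv.symm⟩
  · rintro ⟨⟨hu, rfl⟩, hv, hvu⟩
    exact ⟨⟨⟨hu, hv⟩, hvu.symm⟩, rfl⟩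

theorem sq_card_le_card_image_mul_card_collisions (s : Finset α) (f : α → β) :
    #s ^ 2 ≤ #(s.image f) * #(collisions s f) := by
  rw [card_collisions_eq_sum_sq, card_eq_sum_card_image f s]
  exact sq_sum_le_card_mul_sum_sq

theorem lt_two_mul_card_image_of_mul_card_collisions_lt {s : Finset α} {f : α → β} {n : ℕ}
    (h : n * #(collisions s f) < 2 * #s ^ 2) : n < 2 * #(s.image f) := by
  have := sq_card_le_card_image_mul_card_collisions s f
  exact Nat.lt_of_mul_lt_mul_right (a := #(collisions s f)) (by nlinarith)

end Collisions

section SumsOfProducts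

variable {R : Type*}

def IsSumOfProducts [Semiring R] (n : ℕ) (A B : Finset R) (x : R) : Prop :=
  ∃ a b : Fin n → R, (∀ i, a i ∈ A) ∧ (∀ i, b i ∈ B) ∧ x = ∑ i, a i * b i

theorem IsSumOfProducts.comm [CommSemiring R] {n : ℕ} {A B : Finset R} {x : R}
    (h : IsSumOfProducts n A B x) : IsSumOfProducts n B A x :=
  let ⟨a, b, ha, hb, hx⟩ := h
  ⟨b, a, hb, ha, by simp_rw [hx, mul_comm]⟩

theorem isSumOfProducts_add_self [Semiring R] {n : ℕ} {A B : Finset R} {x : R}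
    (a b c : Fin n → R) (ha : ∀ i, a i ∈ A) (hb : ∀ i, b i ∈ B) (hc : ∀ i, c i ∈ B)
    (hx : x = ∑ i, a i * (b i + c i)) : IsSumOfProducts (n + n) A B x := by
  refine ⟨Fin.append a a, Fin.append b c, Fin.addCases (by simpa only [Fin.append_left])
    (by simpa only [Fin.append_right]), Fin.addCases (by simpa only [Fin.append_left])
    (by simpa only [Fin.append_right]), ?_⟩
  rw [Fin.sum_univ_add, hx]
  simp only [Fin.append_left, Fin.append_right, mul_add, sum_add_distrib]

end SumsOfProducts

theorem card_collisions_sub_mul {R : Type*} [CommRing R] [DecidableEq R] (A B : Finset R)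
    (η : R) : #(collisions (A ×ˢ B) fun z => z.1 - η * z.2) =
      #(collisions (A ×ˢ B) fun z => z.1 + η * z.2) := by
  refine card_bij' (fun p _ => ((p.1.1, p.2.2), (p.2.1, p.1.2)))
    (fun p _ => ((p.1.1, p.2.2), (p.2.1, p.1.2))) ?_ ?_ (fun _ _ => rfl) (fun _ _ => rfl)
  all_goals
    rintro ⟨⟨a, b⟩, a', b'⟩ hp
    simp only [collisions, mem_filter, mem_product] at hp ⊢
    obtain ⟨⟨⟨ha, hb⟩, ha', hb'⟩, heq⟩ := hp
    exact ⟨⟨⟨ha, hb'⟩, ha', hb⟩, by linear_combination heq⟩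

section FiniteField

variable {F : Type*} [Field F] [Fintype F] [DecidableEq F]

theorem card_filter_add_mul_eq_le_one {p p' : F × F} (hne : p ≠ p') :
    #{η : F | p.1 + η * p.2 = p'.1 + η * p'.2} ≤ 1 := by
  refine card_le_one.2 fun η hη η' hη' => ?_
  rw [mem_filter] at hη hη'
  have hd : p.2 - p'.2 ≠ 0 := fun hd => hne <|
    Prod.ext (by linear_combination hη.2 - η * hd) (sub_eq_zero.1 hd)
  exact mul_right_cancel₀ hd (by linear_combination hη.2 - hη'.2)

theorem sum_card_collisions_add_mul_le (s : Finset (F × F)) :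
    ∑ η : F, #(collisions s fun z => z.1 + η * z.2) ≤ Fintype.card F * #s + #s ^ 2 := by
  calc ∑ η : F, #(collisions s fun z => z.1 + η * z.2)
      = ∑ p ∈ s ×ˢ s, #{η : F | p.1.1 + η * p.1.2 = p.2.1 + η * p.2.2} := by
        simp only [collisions, card_filter]
        exact sum_comm
    _ = ∑ p ∈ s.diag, #{η : F | p.1.1 + η * p.1.2 = p.2.1 + η * p.2.2}
        + ∑ p ∈ s.offDiag, #{η : F | p.1.1 + η * p.1.2 = p.2.1 + η * p.2.2} := by
        rw [← diag_union_offDiag, sum_union (disjoint_diag_offDiag s)]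
    _ ≤ #s.diag • Fintype.card F + #s.offDiag • 1 := by
        gcongr
        · exact sum_le_card_nsmul _ _ _ fun p _ => card_le_univ _
        · exact sum_le_card_nsmul _ _ _ fun p hp =>
            card_filter_add_mul_eq_le_one (mem_offDiag.1 hp).2.2
    _ ≤ Fintype.card F * #s + #s ^ 2 := by
        rw [diag_card, offDiag_card, smul_eq_mul, smul_eq_mul, mul_one, sq, mul_comm]
        omega

theorem exists_mul_card_collisions_add_mul_lt {s : Finset (F × F)} (hs : Fintype.card F < #s) :
    ∃ η : F, Fintype.card F * #(collisions s fun z => z.1 + η * z.2) < 2 * #s ^ 2 := by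
  by_contra! hge
  have hq : 0 < Fintype.card F := Fintype.card_pos
  have hsum : Fintype.card F * (2 * #s ^ 2)
      ≤ Fintype.card F * (Fintype.card F * #s + #s ^ 2) := by
    calc Fintype.card F * (2 * #s ^ 2)
        ≤ ∑ η : F, Fintype.card F * #(collisions s fun z => z.1 + η * z.2) := by
          simpa using card_nsmul_le_sum univ _ _ fun η _ => hge η
      _ ≤ _ := by
          rw [← mul_sum]
          exact Nat.mul_le_mul_left _ (sum_card_collisions_add_mul_le s)
  have := Nat.le_of_mul_le_mul_left hsum hq
  nlinarith

theorem exists_lt_two_mul_card_image_add_mul_and_sub_mul {A B : Finset F}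
    (h : Fintype.card F < #A * #B) :
    ∃ η : F, Fintype.card F < 2 * #((A ×ˢ B).image fun z => z.1 + η * z.2) ∧
      Fintype.card F < 2 * #((A ×ˢ B).image fun z => z.1 - η * z.2) := by
  rw [← card_product] at h
  obtain ⟨η, hη⟩ := exists_mul_card_collisions_add_mul_lt h
  exact ⟨η, lt_two_mul_card_image_of_mul_card_collisions_lt hη,
    lt_two_mul_card_image_of_mul_card_collisions_lt (by rwa [card_collisions_sub_mul])⟩

end FiniteField

section Glibichuk

variable {F : Type*} [Field F] [Fintype F] [DecidableEq F] {A B : Finset F}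

theorem isSumOfProducts_of_neg_eq (h : Fintype.card F < #A * #B) (hB : B = -B) (x : F) :
    IsSumOfProducts 8 A B x := by
  have hnegB : ∀ b ∈ B, -b ∈ B := fun b hb => by rw [hB]; exact neg_mem_neg hb
  obtain ⟨η, hS, -⟩ := exists_lt_two_mul_card_image_add_mul_and_sub_mul h
  set S := (A ×ˢ B).image fun z => z.1 + η * z.2
  obtain ⟨p, hp, p', hp', hne, hη⟩ := exists_ne_map_eq_of_card_lt_of_maps_to
    (f := fun z : F × F => η * z.2 - z.1) (t := univ) (by rwa [card_univ, card_product])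
    (fun _ _ => mem_univ _)
  have hd : p.2 - p'.2 ≠ 0 := fun hd => hne <|
    Prod.ext (by linear_combination η * hd - hη) (sub_eq_zero.1 hd)
  obtain ⟨u, hu, v, hv, huv⟩ := exists_add_eq_of_card_lt_card_add_card (X := S) (Y := -S)
    (by rw [card_neg]; omega) (x / (p.2 - p'.2))
  obtain ⟨r, hr, rfl⟩ := mem_image.1 hu
  obtain ⟨w, hw, rfl⟩ := mem_neg.1 hv
  obtain ⟨r', hr', rfl⟩ := mem_image.1 hw
  rw [mem_product] at hp hp' hr hr'
  refine isSumOfProducts_add_self (n := 4) ![r.1, r'.1, p.1, p'.1] ![p.2, p'.2, r.2, r'.2]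
    ![-p'.2, -p.2, -r'.2, -r.2] ?_ ?_ ?_ ?_
  · simp [Fin.forall_fin_succ, hp, hp', hr, hr']
  · simp [Fin.forall_fin_succ, hp, hp', hr, hr']
  · simp [Fin.forall_fin_succ, hp, hp', hr, hr', hnegB]
  · rw [eq_div_iff hd] at huv
    simp only [Fin.sum_univ_four, Matrix.cons_val]
    linear_combination -huv + (r.2 - r'.2) * hη

theorem isSumOfProducts_of_inter_neg_eq_empty (h : Fintype.card F < #A * #B)
    (hB : B ∩ -B = ∅) (x : F) : IsSumOfProducts 8 A B x := by
  obtain ⟨η, hS, hS'⟩ := exists_lt_two_mul_card_image_add_mul_and_sub_mul h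
  set S := (A ×ˢ B).image fun z => z.1 + η * z.2
  set S' := (A ×ˢ B).image fun z => z.1 - η * z.2
  obtain ⟨u, hu, v, hv, huv⟩ :=
    exists_add_eq_of_card_lt_card_add_card (by omega : _ < #S + #S) (0 : F)
  obtain ⟨p, hp, rfl⟩ := mem_image.1 hu
  obtain ⟨p', hp', rfl⟩ := mem_image.1 hv
  rw [mem_product] at hp hp'
  have hd : p.2 + p'.2 ≠ 0 := fun hd => by
    have : p'.2 ∈ B ∩ -B :=
      mem_inter.2 ⟨hp'.2, mem_neg.2 ⟨p.2, hp.2, by linear_combination -hd⟩⟩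
    simp [hB] at this
  obtain ⟨w, hw, w', hw', hww'⟩ :=
    exists_add_eq_of_card_lt_card_add_card (by omega : _ < #S' + #S') (x / (p.2 + p'.2))
  obtain ⟨r, hr, rfl⟩ := mem_image.1 hw
  obtain ⟨r', hr', rfl⟩ := mem_image.1 hw'
  rw [mem_product] at hr hr'
  refine isSumOfProducts_add_self (n := 4) ![r.1, r'.1, p.1, p'.1] ![p.2, p.2, r.2, r.2]
    ![p'.2, p'.2, r'.2, r'.2] ?_ ?_ ?_ ?_
  · simp [Fin.forall_fin_succ, hp, hp', hr, hr']
  · simp [Fin.forall_fin_succ, hp, hr]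
  · simp [Fin.forall_fin_succ, hp', hr']
  · rw [eq_div_iff hd] at hww'
    simp only [Fin.sum_univ_four, Matrix.cons_val]
    linear_combination -hww' - (r.2 + r'.2) * huv

end Glibichuk

open Pointwise in
theorem stmt_12 {F : Type*} [Field F] [Fintype F] [DecidableEq F] (q : ℕ)
    (hq : Fintype.card F = q) (A B : Finset F) (h : q < A.card * B.card)
    (hsym : A = -A ∨ A ∩ (-A) = ∅ ∨ B = -B ∨ B ∩ (-B) = ∅) :
    ∀ x : F, ∃ a b : Fin 8 → F, (∀ i, a i ∈ A) ∧ (∀ i, b i ∈ B) ∧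
      x = ∑ i, a i * b i := by
  intro x
  subst hq
  have h' : Fintype.card F < #B * #A := by rwa [mul_comm]
  rcases hsym with hA | hA | hB | hB
  · exact (isSumOfProducts_of_neg_eq h' hA x).comm
  · exact (isSumOfProducts_of_inter_neg_eq_empty h' hA x).comm
  · exact isSumOfProducts_of_neg_eq h hB x
  · exact isSumOfProducts_of_inter_neg_eq_empty h hB x
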